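/- arXiv:2203.03110 — 5 statements merged into one kernel-verified Lean document; each statement's English description precedes it below -/
import Mathlib

section
/- (Fact 4.2: cascaded gaps satisfy the Bellman difference condition.) For any β ≠ 0, any policy π, any step h ∈ {1,…,H}, any state s ∈ S with a := π_h(s), and any partial trajectory τ_{h−1} = ((s_1,a_1),…,(s_{h−1},a_{h−1})), one has Δ_{h,β}(s,a; τ_{h−1}) = D^π_h(s) − Σ_{s'∈S} P_h(s'|s,a)·D^π_{h+1}(s'), where D^π_h(s) := ψ_β·( exp(β·(R(τ_{h−1}) + V*_h(s))) − exp(β·(R(τ_{h−1}) + V^π_h(s))) ) and D^π_{h+1}(s') := ψ_β·( exp(β·(R(τ_{h−1}) + r_h(s,a) + V*_{h+1}(s'))) − exp(β·(R(τ_{h−1}) + r_h(s,a) + V^π_{h+1}(s'))) ). -/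
open Real Filter Finset

namespace RiskMDP

variable {S A : Type*} [Fintype S] [Fintype A]

/-- Entropic value function of policy `pol`, by remaining-steps fuel:
`entV β r P pol H n s = V^pol_h(s)` with `h = H + 1 - n`. -/
noncomputable def entV (β : ℝ) (r : ℕ → S → A → ℝ) (P : ℕ → S → A → PMF S)
    (pol : ℕ → S → A) (H : ℕ) : ℕ → S → ℝ
  | 0, _ => 0
  | n + 1, s =>
      r (H - n) s (pol (H - n) s) +
        (1 / β) * Real.log (∑ s' : S, (P (H - n) s (pol (H - n) s) s').toReal *
          Real.exp (β * entV β r P pol H n s'))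

/-- Optimal entropic value function, by remaining-steps fuel. -/
noncomputable def entVstar (β : ℝ) (r : ℕ → S → A → ℝ) (P : ℕ → S → A → PMF S)
    (H : ℕ) : ℕ → S → ℝ
  | 0, _ => 0
  | n + 1, s =>
      ⨆ a : A, (r (H - n) s a +
        (1 / β) * Real.log (∑ s' : S, (P (H - n) s a s').toReal *
          Real.exp (β * entVstar β r P H n s')))

/-- Entropic action-value function of policy `pol` at step `h`. -/
noncomputable def entQ (β : ℝ) (r : ℕ → S → A → ℝ) (P : ℕ → S → A → PMF S)
    (pol : ℕ → S → A) (H : ℕ) (h : ℕ) (s : S) (a : A) : ℝ :=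
  r h s a + (1 / β) * Real.log (∑ s' : S, (P h s a s').toReal *
    Real.exp (β * entV β r P pol H (H - h) s'))

/-- Optimal entropic action-value function at step `h`. -/
noncomputable def entQstar (β : ℝ) (r : ℕ → S → A → ℝ) (P : ℕ → S → A → PMF S)
    (H : ℕ) (h : ℕ) (s : S) (a : A) : ℝ :=
  r h s a + (1 / β) * Real.log (∑ s' : S, (P h s a s').toReal *
    Real.exp (β * entVstar β r P H (H - h) s'))

/-- Risk-neutral value function of policy `pol`, by remaining-steps fuel. -/
noncomputable def rnV (r : ℕ → S → A → ℝ) (P : ℕ → S → A → PMF S)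
    (pol : ℕ → S → A) (H : ℕ) : ℕ → S → ℝ
  | 0, _ => 0
  | n + 1, s =>
      r (H - n) s (pol (H - n) s) +
        ∑ s' : S, (P (H - n) s (pol (H - n) s) s').toReal * rnV r P pol H n s'

/-- Risk-neutral optimal value function, by remaining-steps fuel. -/
noncomputable def rnVstar (r : ℕ → S → A → ℝ) (P : ℕ → S → A → PMF S)
    (H : ℕ) : ℕ → S → ℝ
  | 0, _ => 0
  | n + 1, s =>
      ⨆ a : A, (r (H - n) s a +
        ∑ s' : S, (P (H - n) s a s').toReal * rnVstar r P H n s')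

/-- Risk-neutral optimal action-value function at step `h`. -/
noncomputable def rnQstar (r : ℕ → S → A → ℝ) (P : ℕ → S → A → PMF S)
    (H : ℕ) (h : ℕ) (s : S) (a : A) : ℝ :=
  r h s a + ∑ s' : S, (P h s a s').toReal * rnVstar r P H (H - h) s'

/-- PMF on the list of states `(s_h, …, s_{h+n-1})` (so `n` states in total), starting from
state `s` at step `h` and following policy `pol`; built by iterated `PMF.bind`. -/
noncomputable def traj (P : ℕ → S → A → PMF S) (pol : ℕ → S → A) :
    ℕ → ℕ → S → PMF (List S)
  | 0, _, _ => PMF.pure []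
  | n + 1, h, s =>
      ((P h s (pol h s)).bind fun s' => traj P pol n (h + 1) s').map (fun l => s :: l)

/-- Cumulative reward `Σ_i r_{h+i}(s_{h+i}, pol_{h+i}(s_{h+i}))` along a list of states
starting at step `h`. -/
def listReward (r : ℕ → S → A → ℝ) (pol : ℕ → S → A) : ℕ → List S → ℝ
  | _, [] => 0
  | h, s :: l => r h s (pol h s) + listReward r pol (h + 1) l

/-- Cumulative reward `R(τ) = Σ_j r_j(s_j, a_j)` of a partial state–action trajectory
whose first pair is at step `j`. -/
def pairReward (r : ℕ → S → A → ℝ) : ℕ → List (S × A) → ℝ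
  | _, [] => 0
  | j, p :: l => r j p.1 p.2 + pairReward r (j + 1) l

/-- The normalizer `ψ_β`. -/
noncomputable def psi (β : ℝ) (H : ℕ) : ℝ :=
  if 0 < β then 1 / β else Real.exp (-β * H) / β

/-- The cascaded gap `Δ_{h,β}(s, a; τ)`. -/
noncomputable def cgap (β : ℝ) (r : ℕ → S → A → ℝ) (P : ℕ → S → A → PMF S)
    (H : ℕ) (h : ℕ) (s : S) (a : A) (τ : List (S × A)) : ℝ :=
  psi β H * Real.exp (β * pairReward r 1 τ) *
    (Real.exp (β * entVstar β r P H (H + 1 - h) s) -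
      Real.exp (β * entQstar β r P H h s a))

private lemma sum_toReal_one {S : Type*} [Fintype S] (p : PMF S) :
    ∑ s : S, (p s).toReal = 1 := by
  have h := p.tsum_coe
  rw [tsum_fintype] at h
  have := congrArg ENNReal.toReal h
  rwa [ENNReal.toReal_sum (fun s _ => p.apply_ne_top s)] at this

private lemma sum_mul_exp_pos {S : Type*} [Fintype S] (p : PMF S) (f : S → ℝ) :
    0 < ∑ s : S, (p s).toReal * Real.exp (f s) := by
  obtain ⟨s, hs⟩ : ∃ s, 0 < (p s).toReal := by
    by_contra hcon
    push_neg at hcon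
    have h0 : ∑ s : S, (p s).toReal = 0 :=
      Finset.sum_eq_zero fun s _ => le_antisymm (hcon s) ENNReal.toReal_nonneg
    rw [sum_toReal_one] at h0; norm_num at h0
  exact Finset.sum_pos' (fun s _ => mul_nonneg ENNReal.toReal_nonneg (Real.exp_pos _).le)
    ⟨s, Finset.mem_univ s, mul_pos hs (Real.exp_pos _)⟩

/-- **Fact 4.2.** The cascaded gaps satisfy the Bellman difference
condition with `Z^π_h = exp(β (R(τ_{h-1}) + V^π_h(s)))`. -/
theorem cascaded_gap_bellman_difference
    {S A : Type*} [Fintype S] [Nonempty S] [Fintype A] [Nonempty A]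
    (H : ℕ) (hH : 1 ≤ H)
    (r : ℕ → S → A → ℝ) (hr : ∀ h ∈ Finset.Icc 1 H, ∀ s a, 0 ≤ r h s a ∧ r h s a ≤ 1)
    (P : ℕ → S → A → PMF S) :
    ∀ (β : ℝ), β ≠ 0 → ∀ (pol : ℕ → S → A), ∀ h ∈ Finset.Icc 1 H, ∀ (s : S)
      (τ : List (S × A)), τ.length = h - 1 →
      cgap β r P H h s (pol h s) τ
        = psi β H * (Real.exp (β * (pairReward r 1 τ + entVstar β r P H (H + 1 - h) s))
              - Real.exp (β * (pairReward r 1 τ + entV β r P pol H (H + 1 - h) s)))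
          - ∑ s' : S, (P h s (pol h s) s').toReal *
              (psi β H *
                (Real.exp (β * (pairReward r 1 τ + r h s (pol h s) +
                    entVstar β r P H (H - h) s'))
                  - Real.exp (β * (pairReward r 1 τ + r h s (pol h s) +
                    entV β r P pol H (H - h) s')))) := by
  intro β hβ pol h hh s τ hτ
  rw [Finset.mem_Icc] at hh
  obtain ⟨h1, hH'⟩ := hh
  set a := pol h s with ha
  set n := H - h with hn
  have hn1 : H + 1 - h = n + 1 := by omega
  have hn2 : H - n = h := by omega
  have key : ∀ c X : ℝ, 0 < X →
      Real.exp (β * (c + 1 / β * Real.log X)) = Real.exp (β * c) * X := by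
    intro c X hX
    rw [mul_add, Real.exp_add]
    congr 1
    have hb : β * (1 / β * Real.log X) = Real.log X := by field_simp
    rw [hb, Real.exp_log hX]
  have hX : 0 < ∑ s' : S, (P h s a s').toReal * Real.exp (β * entV β r P pol H n s') :=
    sum_mul_exp_pos _ _
  have hY : 0 < ∑ s' : S, (P h s a s').toReal * Real.exp (β * entVstar β r P H n s') :=
    sum_mul_exp_pos _ _
  have hV : Real.exp (β * entV β r P pol H (n + 1) s)
      = Real.exp (β * r h s a) *
        ∑ s' : S, (P h s a s').toReal * Real.exp (β * entV β r P pol H n s') := by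
    rw [entV, hn2, ← ha]
    exact key _ _ hX
  have hQ : Real.exp (β * entQstar β r P H h s a)
      = Real.exp (β * r h s a) *
        ∑ s' : S, (P h s a s').toReal * Real.exp (β * entVstar β r P H n s') := by
    rw [entQstar]
    exact key _ _ hY
  have hsum : (∑ s' : S, (P h s a s').toReal * (psi β H *
      (Real.exp (β * (pairReward r 1 τ + r h s a + entVstar β r P H n s'))
        - Real.exp (β * (pairReward r 1 τ + r h s a + entV β r P pol H n s')))))
    = psi β H * Real.exp (β * pairReward r 1 τ) * Real.exp (β * r h s a) *
        ((∑ s' : S, (P h s a s').toReal * Real.exp (β * entVstar β r P H n s'))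
         - ∑ s' : S, (P h s a s').toReal * Real.exp (β * entV β r P pol H n s')) := by
    rw [mul_sub, Finset.mul_sum, Finset.mul_sum, ← Finset.sum_sub_distrib]
    refine Finset.sum_congr rfl fun s' _ => ?_
    simp only [mul_add, Real.exp_add]
    ring
  rw [cgap, hn1, hsum]
  simp only [mul_add, Real.exp_add]
  rw [hV, hQ]
  ring

end RiskMDP
end

section
/- (Core inequality of Lemma D.1.) Let H ≥ 0 be real, β ≠ 0, and u, v ∈ ℝ with 0 ≤ v ≤ u ≤ H. Then u − v ≤ (ψ̄_β/β)·( exp(β·u) − exp(β·v) ), where ψ̄_β := 1 if β > 0 and ψ̄_β := e^{−βH} if β < 0. -/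
open Real

/-- **core inequality of Lemma D.1.** For `0 ≤ v ≤ u ≤ H` and `β ≠ 0`,
`u - v ≤ (ψ̄_β / β) · (e^{βu} - e^{βv})`, where `ψ̄_β = 1` for `β > 0` and
`ψ̄_β = e^{-βH}` for `β < 0`. -/
theorem seminormalized_exp_gap_bound (H β u v : ℝ) (hH : 0 ≤ H) (hβ : β ≠ 0)
    (hv : 0 ≤ v) (hvu : v ≤ u) (huH : u ≤ H) :
    u - v ≤ (if 0 < β then 1 else Real.exp (-β * H)) / β *
      (Real.exp (β * u) - Real.exp (β * v)) := by
  have hkey : Real.exp (β * v) * (β * (u - v) + 1) ≤ Real.exp (β * u) := by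
    have h1 := Real.add_one_le_exp (β * (u - v))
    have h2 : Real.exp (β * v) * Real.exp (β * (u - v)) = Real.exp (β * u) := by
      rw [← Real.exp_add]; ring_nf
    nlinarith [Real.exp_pos (β * v)]
  have hkey2 : Real.exp (β * u) * (β * (v - u) + 1) ≤ Real.exp (β * v) := by
    have h1 := Real.add_one_le_exp (β * (v - u))
    have h2 : Real.exp (β * u) * Real.exp (β * (v - u)) = Real.exp (β * v) := by
      rw [← Real.exp_add]; ring_nf
    nlinarith [Real.exp_pos (β * u)]
  rcases lt_or_gt_of_ne hβ with hneg | hpos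
  · rw [if_neg (not_lt.mpr hneg.le)]
    rw [div_mul_eq_mul_div, le_div_iff_of_neg hneg]
    have h4 : Real.exp (β * u) * (-β * (u - v)) ≤ Real.exp (β * v) - Real.exp (β * u) := by
      nlinarith
    have h5 : Real.exp (-β * H) * (Real.exp (β * u) * (-β * (u - v))) ≤
        Real.exp (-β * H) * (Real.exp (β * v) - Real.exp (β * u)) := by
      exact mul_le_mul_of_nonneg_left h4 (Real.exp_pos _).le
    have h6 : 1 ≤ Real.exp (-β * H) * Real.exp (β * u) := by
      rw [← Real.exp_add]
      exact Real.one_le_exp (by nlinarith)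
    nlinarith [mul_le_mul_of_nonneg_right h6
      (by nlinarith : (0:ℝ) ≤ -β * (u - v))]
  · rw [if_pos hpos]
    rw [div_mul_eq_mul_div, le_div_iff₀ hpos, one_mul]
    have h6 : 1 ≤ Real.exp (β * v) := Real.one_le_exp (by positivity)
    nlinarith [mul_le_mul_of_nonneg_right h6
      (by nlinarith : (0:ℝ) ≤ β * (u - v))]
end

section
/- (Nonnegativity and boundedness of cascaded gaps.) For every β ≠ 0, every h ∈ {1,…,H}, every (s,a) ∈ S × A, and every partial trajectory τ_{h−1} of length h−1 with state–action pairs in S × A, one has 0 ≤ Δ_{h,β}(s,a; τ_{h−1}) ≤ (1/|β|)·( e^{|β|·H} − 1 ). -/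
open Real Filter Finset

namespace RiskMDP

variable {S A : Type*} [Fintype S] [Fintype A]

/-! Write `R`, `Q`, `V` for the reward of `τ`, `Q*_h(s, a)` and `V*_h(s)`. The entropic certainty
equivalent of `f` lies between the extreme values of `f`, so rewards in `[0, 1]` give
`0 ≤ Q ≤ V ≤ H + 1 - h` and `0 ≤ R ≤ h - 1`, hence `0 ≤ R + Q ≤ R + V ≤ H`. The gap equals
`ψ_β (e^{β(R+V)} - e^{β(R+Q)})`, and for `0 ≤ u ≤ v ≤ H` monotonicity of `exp` places
`ψ_β (e^{βv} - e^{βu})` in `[0, (e^{|β|H} - 1) / |β|]`. -/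

theorem _root_.PMF.sum_toReal_eq_one {Ω : Type*} [Fintype Ω] (p : PMF Ω) :
    ∑ ω, (p ω).toReal = 1 := by
  rw [← ENNReal.toReal_sum fun ω _ => p.apply_ne_top ω, ← ENNReal.toReal_one, ← p.tsum_coe,
    tsum_fintype]

theorem _root_.PMF.sum_toReal_mul_le {Ω : Type*} [Fintype Ω] (p : PMF Ω) {g : Ω → ℝ} {M : ℝ}
    (hg : ∀ ω, g ω ≤ M) : ∑ ω, (p ω).toReal * g ω ≤ M :=
  calc ∑ ω, (p ω).toReal * g ω ≤ ∑ ω, (p ω).toReal * M :=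
        Finset.sum_le_sum fun ω _ => mul_le_mul_of_nonneg_left (hg ω) ENNReal.toReal_nonneg
    _ = M := by rw [← Finset.sum_mul, p.sum_toReal_eq_one, one_mul]

theorem _root_.PMF.le_sum_toReal_mul {Ω : Type*} [Fintype Ω] (p : PMF Ω) {g : Ω → ℝ} {m : ℝ}
    (hg : ∀ ω, m ≤ g ω) : m ≤ ∑ ω, (p ω).toReal * g ω :=
  calc m = ∑ ω, (p ω).toReal * m := by rw [← Finset.sum_mul, p.sum_toReal_eq_one, one_mul]
    _ ≤ ∑ ω, (p ω).toReal * g ω :=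
        Finset.sum_le_sum fun ω _ => mul_le_mul_of_nonneg_left (hg ω) ENNReal.toReal_nonneg

noncomputable def entropicRisk {Ω : Type*} [Fintype Ω] (β : ℝ) (p : PMF Ω) (f : Ω → ℝ) : ℝ :=
  (1 / β) * Real.log (∑ ω, (p ω).toReal * Real.exp (β * f ω))

section EntropicRisk

variable {Ω : Type*} [Fintype Ω] (p : PMF Ω) {f : Ω → ℝ} {c d : ℝ}

theorem entropicRisk_neg_neg (β : ℝ) (f : Ω → ℝ) :
    entropicRisk (-β) p (-f) = -entropicRisk β p f := by
  simp only [entropicRisk, Pi.neg_apply, mul_neg, neg_mul, neg_neg, one_div, inv_neg]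

theorem entropicRisk_mem_Icc_of_pos {β : ℝ} (hβ : 0 < β) (hf : ∀ ω, f ω ∈ Set.Icc c d) :
    entropicRisk β p f ∈ Set.Icc c d := by
  have hlow : Real.exp (β * c) ≤ ∑ ω, (p ω).toReal * Real.exp (β * f ω) :=
    p.le_sum_toReal_mul fun ω => Real.exp_le_exp.2 (by nlinarith [(hf ω).1])
  have hup : ∑ ω, (p ω).toReal * Real.exp (β * f ω) ≤ Real.exp (β * d) :=
    p.sum_toReal_mul_le fun ω => Real.exp_le_exp.2 (by nlinarith [(hf ω).2])
  have hpos := (Real.exp_pos (β * c)).trans_le hlow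
  rw [entropicRisk, one_div_mul_eq_div, Set.mem_Icc, le_div_iff₀ hβ, div_le_iff₀ hβ,
    mul_comm c, mul_comm d, Real.le_log_iff_exp_le hpos, Real.log_le_iff_le_exp hpos]
  exact ⟨hlow, hup⟩

theorem entropicRisk_mem_Icc {β : ℝ} (hβ : β ≠ 0) (hf : ∀ ω, f ω ∈ Set.Icc c d) :
    entropicRisk β p f ∈ Set.Icc c d := by
  rcases hβ.lt_or_gt with hneg | hpos
  · have hf' : ∀ ω, (-f) ω ∈ Set.Icc (-d) (-c) := fun ω => by
      simpa [and_comm] using hf ω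
    have := entropicRisk_mem_Icc_of_pos p (neg_pos.2 hneg) hf'
    rw [← neg_neg (entropicRisk β p f), ← entropicRisk_neg_neg]
    constructor <;> linarith [this.1, this.2]
  · exact entropicRisk_mem_Icc_of_pos p hpos hf

end EntropicRisk

theorem exp_sub_exp_div_mem_Icc {β u v L : ℝ} (hβ : 0 < β) (hu : 0 ≤ u) (huv : u ≤ v)
    (hv : v ≤ L) :
    (Real.exp (β * v) - Real.exp (β * u)) / β ∈ Set.Icc 0 ((Real.exp (β * L) - 1) / β) := by
  refine ⟨div_nonneg (sub_nonneg.2 (Real.exp_le_exp.2 ?_)) hβ.le,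
    div_le_div_of_nonneg_right (sub_le_sub (Real.exp_le_exp.2 ?_) (Real.one_le_exp ?_)) hβ.le⟩
  all_goals nlinarith

/-- For `β < 0` the factor `e^{-βH}` in `ψ_β` turns the gap into the `β > 0` case for `-β`,
with `u, v` reflected to `H - v, H - u`. -/
theorem psi_mul_exp_sub_exp_mem_Icc {β u v : ℝ} {H : ℕ} (hβ : β ≠ 0) (hu : 0 ≤ u)
    (huv : u ≤ v) (hv : v ≤ H) :
    psi β H * (Real.exp (β * v) - Real.exp (β * u)) ∈
      Set.Icc 0 ((1 / |β|) * (Real.exp (|β| * H) - 1)) := by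
  rcases hβ.lt_or_gt with hneg | hpos
  · have hreflect : psi β H * (Real.exp (β * v) - Real.exp (β * u)) =
        (Real.exp (-β * (H - u)) - Real.exp (-β * (H - v))) / -β := by
      rw [psi, if_neg (not_lt.2 hneg.le)]
      field_simp
      rw [mul_sub, ← Real.exp_add, ← Real.exp_add]
      ring_nf
    rw [hreflect, abs_of_neg hneg, one_div_mul_eq_div]
    exact exp_sub_exp_div_mem_Icc (neg_pos.2 hneg) (by linarith) (by linarith) (by linarith)
  · rw [psi, if_pos hpos, abs_of_pos hpos, one_div_mul_eq_div, one_div_mul_eq_div]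
    exact exp_sub_exp_div_mem_Icc hpos hu huv hv

theorem pairReward_mem_Icc {S A : Type*} {H : ℕ} {r : ℕ → S → A → ℝ}
    (hr : ∀ h ∈ Finset.Icc 1 H, ∀ s a, r h s a ∈ Set.Icc 0 1) :
    ∀ (τ : List (S × A)) (j : ℕ), 1 ≤ j → j + τ.length ≤ H + 1 →
      pairReward r j τ ∈ Set.Icc 0 (τ.length : ℝ)
  | [], _, _, _ => by simp [pairReward]
  | q :: τ, j, hj, hlen => by
    rw [List.length_cons] at hlen
    have hreward := hr j (Finset.mem_Icc.2 ⟨hj, by omega⟩) q.1 q.2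
    have hrest := pairReward_mem_Icc hr τ (j + 1) (by omega) (by omega)
    rw [pairReward, List.length_cons]
    push_cast
    exact ⟨by linarith [hreward.1, hrest.1], by linarith [hreward.2, hrest.2]⟩

section Values

variable {S A : Type*} [Fintype S] {β : ℝ} {H : ℕ} {r : ℕ → S → A → ℝ}
  {P : ℕ → S → A → PMF S}

theorem entVstar_succ (n : ℕ) (s : S) :
    entVstar β r P H (n + 1) s =
      ⨆ a, (r (H - n) s a + entropicRisk β (P (H - n) s a) (entVstar β r P H n)) :=
  rfl

theorem entQstar_eq (h : ℕ) (s : S) (a : A) :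
    entQstar β r P H h s a = r h s a + entropicRisk β (P h s a) (entVstar β r P H (H - h)) :=
  rfl

theorem entVstar_eq_iSup_entQstar {h : ℕ} (hh : h ≤ H) (s : S) :
    entVstar β r P H (H + 1 - h) s = ⨆ a, entQstar β r P H h s a := by
  rw [show H + 1 - h = H - h + 1 by omega, entVstar_succ, Nat.sub_sub_self hh]
  rfl

theorem entQstar_le_entVstar [Finite A] {h : ℕ} (hh : h ≤ H) (s : S) (a : A) :
    entQstar β r P H h s a ≤ entVstar β r P H (H + 1 - h) s := by
  rw [entVstar_eq_iSup_entQstar hh]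
  exact le_ciSup (Set.finite_range _).bddAbove a

theorem entVstar_mem_Icc (hr : ∀ h ∈ Finset.Icc 1 H, ∀ s a, r h s a ∈ Set.Icc 0 1)
    (hβ : β ≠ 0) :
    ∀ n ≤ H, ∀ s, entVstar β r P H n s ∈ Set.Icc 0 (n : ℝ) := by
  intro n
  induction n with
  | zero => simp [entVstar]
  | succ n ih =>
    intro hn s
    have hstep : ∀ a, r (H - n) s a + entropicRisk β (P (H - n) s a) (entVstar β r P H n) ∈
        Set.Icc 0 ((n + 1 : ℕ) : ℝ) := fun a => by
      have hreward := hr (H - n) (Finset.mem_Icc.2 ⟨by omega, by omega⟩) s a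
      have hrisk := entropicRisk_mem_Icc (P (H - n) s a) hβ (ih (by omega))
      push_cast
      exact ⟨by linarith [hreward.1, hrisk.1], by linarith [hreward.2, hrisk.2]⟩
    rw [entVstar_succ]
    exact ⟨Real.iSup_nonneg fun a => (hstep a).1,
      Real.iSup_le (fun a => (hstep a).2) (Nat.cast_nonneg _)⟩

theorem entQstar_nonneg (hr : ∀ h ∈ Finset.Icc 1 H, ∀ s a, r h s a ∈ Set.Icc 0 1)
    (hβ : β ≠ 0) {h : ℕ} (hh : h ∈ Finset.Icc 1 H) (s : S) (a : A) :
    0 ≤ entQstar β r P H h s a := by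
  rw [entQstar_eq]
  exact add_nonneg (hr h hh s a).1
    (entropicRisk_mem_Icc _ hβ (entVstar_mem_Icc hr hβ (H - h) (Nat.sub_le H h))).1

theorem cgap_eq (h : ℕ) (s : S) (a : A) (τ : List (S × A)) :
    cgap β r P H h s a τ = psi β H *
      (Real.exp (β * (pairReward r 1 τ + entVstar β r P H (H + 1 - h) s)) -
        Real.exp (β * (pairReward r 1 τ + entQstar β r P H h s a))) := by
  rw [cgap, mul_assoc, mul_sub, ← Real.exp_add, ← Real.exp_add, mul_add, mul_add]

end Values

theorem cascaded_gap_nonneg_and_bounded_general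
    {S A : Type*} [Fintype S] [Fintype A]
    (H : ℕ)
    (r : ℕ → S → A → ℝ) (hr : ∀ h ∈ Finset.Icc 1 H, ∀ s a, 0 ≤ r h s a ∧ r h s a ≤ 1)
    (P : ℕ → S → A → PMF S) :
    ∀ (β : ℝ), β ≠ 0 → ∀ h ∈ Finset.Icc 1 H, ∀ (s : S) (a : A) (τ : List (S × A)),
      τ.length = h - 1 →
      0 ≤ cgap β r P H h s a τ ∧
        cgap β r P H h s a τ ≤ (1 / |β|) * (Real.exp (|β| * H) - 1) := by
  intro β hβ h hh s a τ hτ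
  obtain ⟨h_pos, hhH⟩ := Finset.mem_Icc.1 hh
  obtain ⟨hR₀, hR⟩ := pairReward_mem_Icc hr τ 1 le_rfl (by omega)
  have hV : entVstar β r P H (H + 1 - h) s ≤ (H + 1 - h : ℕ) :=
    (entVstar_mem_Icc hr hβ _ (by omega) s).2
  have hQ₀ : 0 ≤ entQstar β r P H h s a := entQstar_nonneg hr hβ hh s a
  have hQV : entQstar β r P H h s a ≤ entVstar β r P H (H + 1 - h) s :=
    entQstar_le_entVstar hhH s a
  have hsteps : ((h - 1 : ℕ) : ℝ) + ((H + 1 - h : ℕ) : ℝ) = H := by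
    rw [← Nat.cast_add]
    congr 1
    omega
  rw [hτ] at hR
  rw [cgap_eq]
  exact psi_mul_exp_sub_exp_mem_Icc hβ (by linarith) (by linarith) (by linarith)

/-- Nonnegativity and boundedness of the cascaded gaps:
`0 ≤ Δ_{h,β}(s,a;τ_{h-1}) ≤ (1/|β|) (e^{|β|H} - 1)`. -/
theorem cascaded_gap_nonneg_and_bounded
    {S A : Type*} [Fintype S] [Nonempty S] [Fintype A] [Nonempty A]
    (H : ℕ) (hH : 1 ≤ H)
    (r : ℕ → S → A → ℝ) (hr : ∀ h ∈ Finset.Icc 1 H, ∀ s a, 0 ≤ r h s a ∧ r h s a ≤ 1)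
    (P : ℕ → S → A → PMF S) :
    ∀ (β : ℝ), β ≠ 0 → ∀ h ∈ Finset.Icc 1 H, ∀ (s : S) (a : A) (τ : List (S × A)),
      τ.length = h - 1 →
      0 ≤ cgap β r P H h s a τ ∧
        cgap β r P H h s a τ ≤ (1 / |β|) * (Real.exp (|β| * H) - 1) :=
  cascaded_gap_nonneg_and_bounded_general H r hr P

end RiskMDP
end

section
/- (Lemma B.1: exponential regret decomposition.) For any policy π and any initial state s₁ ∈ S, (1/β)·( exp(β·V*_1(s₁)) − exp(β·V^π_1(s₁)) ) = E_{(s_1,…,s_H) ∼ μ^π_1(s₁)} [ Σ_{h=1}^{H} Δ̄_h( s_h, π_h(s_h); τ^π_{h−1} ) ], where for the sampled state sequence the π-controlled partial trajectory is τ^π_{h−1} := ((s_1, π_1(s_1)),…,(s_{h−1}, π_{h−1}(s_{h−1}))) and the semi-normalized gap is Δ̄_h(s,a; τ) := (1/β)·exp(β·R(τ))·( exp(β·V*_h(s)) − exp(β·Q*_h(s,a)) ) with R(τ) := Σ_{j=1}^{h−1} r_j(s_j,a_j). -/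
open Real Filter Finset

namespace RiskMDP

variable {S A : Type*} [Fintype S] [Fintype A]

variable {S A : Type*}

/-- The sum `Σ_h Δ̄_h(s_h, π_h(s_h); τ^π_{h-1})` of semi-normalized cascaded gaps along a
realized list of states starting at step `h` with accumulated partial trajectory `τ`,
where `Δ̄_h(s,a;τ) = (1/β) e^{β R(τ)} (e^{β V*_h(s)} - e^{β Q*_h(s,a)})`. -/
noncomputable def gapSum [Fintype S] [Fintype A] (β : ℝ) (r : ℕ → S → A → ℝ)
    (P : ℕ → S → A → PMF S) (pol : ℕ → S → A) (H : ℕ) :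
    ℕ → List (S × A) → List S → ℝ
  | _, _, [] => 0
  | h, τ, s :: l =>
      (1 / β) * Real.exp (β * pairReward r 1 τ) *
          (Real.exp (β * entVstar β r P H (H + 1 - h) s) -
            Real.exp (β * entQstar β r P H h s (pol h s))) +
        gapSum β r P pol H (h + 1) (τ ++ [(s, pol h s)]) l

/-! In exponential form the entropic Bellman equations are linear:
`e^{β Q*_h(s,a)} = e^{β r_h(s,a)} E_{s' ∼ P_h(s,a)} e^{β V*_{h+1}(s')}`, and likewise for
`V^π_h(s)` with `a = π_h(s)` and `V^π_{h+1}`. Writing `c(τ) = e^{β R(τ)} / β`, the expectation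
over the next state of `c(τ')(e^{β V*_{h+1}} - e^{β V^π_{h+1}})`, with `τ' = τ ++ [(s, π_h s)]`, is
therefore `c(τ)(e^{β Q*_h(s, π_h s)} - e^{β V^π_h(s)})`. Adding the gap
`c(τ)(e^{β V*_h(s)} - e^{β Q*_h(s, π_h s)})` of step `h` gives `c(τ)(e^{β V*_h(s)} - e^{β V^π_h(s)})`,
so the regret telescopes along the trajectory. -/

theorem _root_.PMF.hasSum_toReal {α : Type*} (p : PMF α) : HasSum (fun a => (p a).toReal) 1 := by
  have h := ENNReal.hasSum_toReal p.tsum_coe_ne_top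
  rwa [← ENNReal.tsum_toReal_eq p.apply_ne_top, p.tsum_coe, ENNReal.toReal_one] at h

theorem _root_.PMF.sum_toReal_mul_pos {α : Type*} [Fintype α] (p : PMF α) {f : α → ℝ}
    (hf : ∀ a, 0 < f a) : 0 < ∑ a, (p a).toReal * f a := by
  obtain ⟨a, -, ha⟩ : ∃ a ∈ univ, (p a).toReal ≠ 0 := by
    refine exists_ne_zero_of_sum_ne_zero ?_
    rw [(hasSum_fintype _).unique p.hasSum_toReal]
    exact one_ne_zero
  exact sum_pos' (fun b _ => mul_nonneg ENNReal.toReal_nonneg (hf b).le)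
    ⟨a, mem_univ a, mul_pos (ENNReal.toReal_nonneg.lt_of_ne' ha) (hf a)⟩

theorem _root_.PMF.toReal_bind_apply {α β : Type*} [Fintype α] (p : PMF α) (u : α → PMF β)
    (b : β) : ((p.bind u) b).toReal = ∑ a, (p a).toReal * (u a b).toReal := by
  rw [PMF.bind_apply, tsum_fintype, ENNReal.toReal_sum fun a _ =>
    ENNReal.mul_ne_top (p.apply_ne_top a) ((u a).apply_ne_top b)]
  simp only [ENNReal.toReal_mul]

theorem _root_.PMF.hasSum_toReal_bind_mul {α β : Type*} [Fintype α] (p : PMF α)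
    (u : α → PMF β) {f : β → ℝ} {v : α → ℝ}
    (hu : ∀ a, HasSum (fun b => (u a b).toReal * f b) (v a)) :
    HasSum (fun b => ((p.bind u) b).toReal * f b) (∑ a, (p a).toReal * v a) := by
  simp_rw [PMF.toReal_bind_apply, sum_mul, mul_assoc]
  exact hasSum_sum fun a _ => (hu a).mul_left _

theorem _root_.PMF.hasSum_toReal_map_mul_iff {α β : Type*} (p : PMF α) {g : α → β}
    (hg : Function.Injective g) {f : β → ℝ} {c : ℝ} :
    HasSum (fun b => ((p.map g) b).toReal * f b) c ↔
      HasSum (fun a => (p a).toReal * f (g a)) c := by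
  have hmap : ∀ a, (p.map g) (g a) = p a := fun a => by
    rw [PMF.map_apply, tsum_eq_single a fun a' ha' => if_neg fun h => ha' (hg h).symm, if_pos rfl]
  have hzero : ∀ b ∉ Set.range g, (p.map g) b = 0 := fun b hb => by
    rw [PMF.apply_eq_zero_iff, PMF.support_map]
    exact fun ⟨a, _, hab⟩ => hb ⟨a, hab⟩
  rw [← hg.hasSum_iff fun b hb => by rw [hzero b hb, ENNReal.toReal_zero, zero_mul]]
  simp only [Function.comp_def, hmap]

theorem exp_mul_add_one_div_mul_log {β : ℝ} (hβ : β ≠ 0) (c : ℝ) {X : ℝ} (hX : 0 < X) :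
    Real.exp (β * (c + 1 / β * Real.log X)) = Real.exp (β * c) * X := by
  rw [mul_add, ← mul_assoc, mul_one_div_cancel hβ, one_mul, Real.exp_add, Real.exp_log hX]

section Bellman

variable {S A : Type*} [Fintype S] {β : ℝ} (hβ : β ≠ 0) (r : ℕ → S → A → ℝ)
  (P : ℕ → S → A → PMF S) (pol : ℕ → S → A) (H : ℕ)
include hβ

theorem exp_mul_entV_succ (n : ℕ) (s : S) :
    Real.exp (β * entV β r P pol H (n + 1) s) =
      Real.exp (β * r (H - n) s (pol (H - n) s)) *
        ∑ s', (P (H - n) s (pol (H - n) s) s').toReal * Real.exp (β * entV β r P pol H n s') := by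
  rw [entV]
  exact exp_mul_add_one_div_mul_log hβ _ ((P _ s _).sum_toReal_mul_pos fun _ => Real.exp_pos _)

theorem exp_mul_entQstar (h : ℕ) (s : S) (a : A) :
    Real.exp (β * entQstar β r P H h s a) =
      Real.exp (β * r h s a) *
        ∑ s', (P h s a s').toReal * Real.exp (β * entVstar β r P H (H - h) s') := by
  rw [entQstar]
  exact exp_mul_add_one_div_mul_log hβ _ ((P h s a).sum_toReal_mul_pos fun _ => Real.exp_pos _)

theorem sum_toReal_mul_regret_succ {h n : ℕ} (hhn : h + n = H) (s : S) (R : ℝ) :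
    ∑ s', (P h s (pol h s) s').toReal *
        (1 / β * Real.exp (β * (R + r h s (pol h s))) *
          (Real.exp (β * entVstar β r P H n s') - Real.exp (β * entV β r P pol H n s'))) =
      1 / β * Real.exp (β * R) *
        (Real.exp (β * entQstar β r P H h s (pol h s)) -
          Real.exp (β * entV β r P pol H (n + 1) s)) := by
  obtain rfl : h = H - n := by omega
  rw [exp_mul_entQstar hβ, exp_mul_entV_succ hβ, Nat.sub_sub_self (by omega), mul_sum, mul_sum,
    ← sum_sub_distrib, mul_sum]
  exact sum_congr rfl fun _ _ => by rw [mul_add, Real.exp_add]; ring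

end Bellman

theorem pairReward_append {S A : Type*} (r : ℕ → S → A → ℝ) (τ : List (S × A)) (j : ℕ) (s : S)
    (a : A) : pairReward r j (τ ++ [(s, a)]) = pairReward r j τ + r (j + τ.length) s a := by
  induction τ generalizing j with
  | nil => simp [pairReward]
  | cons p τ ih =>
    simp only [List.cons_append, pairReward, ih, List.length_cons]
    rw [show j + 1 + τ.length = j + (τ.length + 1) by omega, add_assoc]

theorem hasSum_traj_mul_gapSum {S A : Type*} [Fintype S] [Fintype A] {β : ℝ} (hβ : β ≠ 0)
    (r : ℕ → S → A → ℝ) (P : ℕ → S → A → PMF S) (pol : ℕ → S → A) (H n : ℕ) {h : ℕ}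
    (τ : List (S × A)) (s : S) (hhn : h + n = H + 1) (hτ : τ.length + 1 = h) :
    HasSum (fun l => (traj P pol n h s l).toReal * gapSum β r P pol H h τ l)
      (1 / β * Real.exp (β * pairReward r 1 τ) *
        (Real.exp (β * entVstar β r P H n s) - Real.exp (β * entV β r P pol H n s))) := by
  induction n generalizing h τ s with
  | zero =>
    have hzero : ∀ l, (traj P pol 0 h s l).toReal * gapSum β r P pol H h τ l = 0 := by
      rintro (_ | ⟨s', l⟩) <;> simp [traj, gapSum]
    simp [entVstar, entV, hzero, hasSum_zero]
  | succ n ih =>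
    have hτ' : pairReward r 1 (τ ++ [(s, pol h s)]) = pairReward r 1 τ + r h s (pol h s) := by
      rw [pairReward_append, add_comm 1, hτ]
    have htail := (P h s (pol h s)).hasSum_toReal_bind_mul _ fun s' =>
      ih (h := h + 1) (τ ++ [(s, pol h s)]) s' (by omega) (by simp [hτ])
    rw [hτ', sum_toReal_mul_regret_succ hβ r P pol H (by omega : h + n = H)] at htail
    have hstep := (((P h s (pol h s)).bind (traj P pol n (h + 1))).hasSum_toReal.mul_right
      (1 / β * Real.exp (β * pairReward r 1 τ) *
        (Real.exp (β * entVstar β r P H (n + 1) s) -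
          Real.exp (β * entQstar β r P H h s (pol h s))))).add htail
    rw [one_mul, ← mul_add, sub_add_sub_cancel] at hstep
    rw [traj, PMF.hasSum_toReal_map_mul_iff _ List.cons_injective]
    refine hstep.congr_fun fun l => ?_
    rw [gapSum, show H + 1 - h = n + 1 by omega, mul_add]

theorem exponential_regret_decomposition_general
    [Fintype S] [Fintype A]
    (H : ℕ) (β : ℝ) (hβ : β ≠ 0)
    (r : ℕ → S → A → ℝ)
    (P : ℕ → S → A → PMF S) (pol : ℕ → S → A) (s₁ : S) :
    (1 / β) * (Real.exp (β * entVstar β r P H H s₁) -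
        Real.exp (β * entV β r P pol H H s₁))
      = ∑' l : List S, (traj P pol H 1 s₁ l).toReal * gapSum β r P pol H 1 [] l := by
  simpa [pairReward] using
    (hasSum_traj_mul_gapSum hβ r P pol H H [] s₁ (add_comm 1 H) rfl).tsum_eq.symm

/-- **Lemma B.1: exponential regret decomposition.** For any policy `π`
and initial state `s₁`,
`(1/β)(e^{β V*_1(s₁)} - e^{β V^π_1(s₁)}) = E_{μ^π_1(s₁)}[Σ_{h=1}^H Δ̄_h(s_h, π_h(s_h); τ^π_{h-1})]`. -/
theorem exponential_regret_decomposition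
    [Fintype S] [Nonempty S] [Fintype A] [Nonempty A]
    (H : ℕ) (hH : 1 ≤ H) (β : ℝ) (hβ : β ≠ 0)
    (r : ℕ → S → A → ℝ) (hr : ∀ h ∈ Finset.Icc 1 H, ∀ s a, 0 ≤ r h s a ∧ r h s a ≤ 1)
    (P : ℕ → S → A → PMF S) (pol : ℕ → S → A) (s₁ : S) :
    (1 / β) * (Real.exp (β * entVstar β r P H H s₁) -
        Real.exp (β * entV β r P pol H H s₁))
      = ∑' l : List S, (traj P pol H 1 s₁ l).toReal * gapSum β r P pol H 1 [] l :=
  exponential_regret_decomposition_general H β hβ r P pol s₁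

end RiskMDP
end

section
/- (Lemma D.1: regret is bounded by the semi-normalized exponential regret.) For any β ≠ 0, any K ∈ ℕ, any policies π¹,…,π^K, and any initial state s₁ ∈ S, Σ_{k=1}^{K} ( V*_1(s₁) − V^{π^k}_1(s₁) ) ≤ ψ̄_β · (1/β) · Σ_{k=1}^{K} ( exp(β·V*_1(s₁)) − exp(β·V^{π^k}_1(s₁)) ), where ψ̄_β := 1 if β > 0 and ψ̄_β := e^{−βH} if β < 0. -/
open Real Filter Finset

namespace RiskMDP

variable {S A : Type*} [Fintype S] [Fintype A]

section Aux


variable {S : Type*} [Fintype S] [Nonempty S]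

lemma pmf_sum_toReal (p : PMF S) : ∑ s : S, (p s).toReal = 1 := by
  have h := p.tsum_coe
  rw [tsum_fintype] at h
  rw [← ENNReal.toReal_sum fun a _ => p.apply_ne_top a, h, ENNReal.toReal_one]

lemma sum_exp_ge (β : ℝ) (p : PMF S) (V : S → ℝ) (a : ℝ) (h : ∀ s, a ≤ β * V s) :
    Real.exp a ≤ ∑ s : S, (p s).toReal * Real.exp (β * V s) :=
  calc Real.exp a = ∑ s : S, (p s).toReal * Real.exp a := by
        rw [← Finset.sum_mul, pmf_sum_toReal, one_mul]
    _ ≤ _ := Finset.sum_le_sum fun s _ =>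
        mul_le_mul_of_nonneg_left (Real.exp_le_exp.2 (h s)) ENNReal.toReal_nonneg

lemma sum_exp_le (β : ℝ) (p : PMF S) (V : S → ℝ) (b : ℝ) (h : ∀ s, β * V s ≤ b) :
    ∑ s : S, (p s).toReal * Real.exp (β * V s) ≤ Real.exp b :=
  calc ∑ s : S, (p s).toReal * Real.exp (β * V s)
      ≤ ∑ s : S, (p s).toReal * Real.exp b := Finset.sum_le_sum fun s _ =>
        mul_le_mul_of_nonneg_left (Real.exp_le_exp.2 (h s)) ENNReal.toReal_nonneg
    _ = Real.exp b := by rw [← Finset.sum_mul, pmf_sum_toReal, one_mul]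

lemma sum_exp_pos (β : ℝ) (p : PMF S) (V : S → ℝ) :
    0 < ∑ s : S, (p s).toReal * Real.exp (β * V s) := by
  have h := sum_exp_ge β p V (Finset.univ.inf' Finset.univ_nonempty fun s => β * V s)
    (fun s => Finset.inf'_le _ (Finset.mem_univ s))
  exact lt_of_lt_of_le (Real.exp_pos _) h

lemma logsum_mono {β : ℝ} (hβ : β ≠ 0) (p : PMF S) {V W : S → ℝ} (h : ∀ s, V s ≤ W s) :
    (1/β) * Real.log (∑ s : S, (p s).toReal * Real.exp (β * V s)) ≤
      (1/β) * Real.log (∑ s : S, (p s).toReal * Real.exp (β * W s)) := by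
  rcases hβ.lt_or_gt with hneg | hpos
  · have hle : ∑ s : S, (p s).toReal * Real.exp (β * W s)
        ≤ ∑ s : S, (p s).toReal * Real.exp (β * V s) :=
      Finset.sum_le_sum fun s _ => mul_le_mul_of_nonneg_left
        (Real.exp_le_exp.2 (mul_le_mul_of_nonpos_left (h s) hneg.le)) ENNReal.toReal_nonneg
    exact mul_le_mul_of_nonpos_left (Real.log_le_log (sum_exp_pos β p W) hle)
      (one_div_nonpos.mpr hneg.le)
  · have hle : ∑ s : S, (p s).toReal * Real.exp (β * V s)
        ≤ ∑ s : S, (p s).toReal * Real.exp (β * W s) :=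
      Finset.sum_le_sum fun s _ => mul_le_mul_of_nonneg_left
        (Real.exp_le_exp.2 (mul_le_mul_of_nonneg_left (h s) hpos.le)) ENNReal.toReal_nonneg
    exact mul_le_mul_of_nonneg_left (Real.log_le_log (sum_exp_pos β p V) hle)
      (one_div_nonneg.mpr hpos.le)

lemma logsum_le {β : ℝ} (hβ : β ≠ 0) (p : PMF S) {V : S → ℝ} {b : ℝ} (h : ∀ s, V s ≤ b) :
    (1/β) * Real.log (∑ s : S, (p s).toReal * Real.exp (β * V s)) ≤ b := by
  rcases hβ.lt_or_gt with hneg | hpos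
  · have hge : Real.exp (β * b) ≤ ∑ s : S, (p s).toReal * Real.exp (β * V s) :=
      sum_exp_ge β p V (β * b) fun s => mul_le_mul_of_nonpos_left (h s) hneg.le
    have hlog : β * b ≤ Real.log (∑ s : S, (p s).toReal * Real.exp (β * V s)) := by
      have := Real.log_le_log (Real.exp_pos _) hge
      rwa [Real.log_exp] at this
    have := mul_le_mul_of_nonpos_left hlog (one_div_nonpos.mpr hneg.le)
    calc (1/β) * Real.log (∑ s : S, (p s).toReal * Real.exp (β * V s))
        ≤ (1/β) * (β * b) := this
      _ = b := by field_simp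
  · have hle : ∑ s : S, (p s).toReal * Real.exp (β * V s) ≤ Real.exp (β * b) :=
      sum_exp_le β p V (β * b) fun s => mul_le_mul_of_nonneg_left (h s) hpos.le
    have hlog : Real.log (∑ s : S, (p s).toReal * Real.exp (β * V s)) ≤ β * b := by
      have := Real.log_le_log (sum_exp_pos β p V) hle
      rwa [Real.log_exp] at this
    calc (1/β) * Real.log (∑ s : S, (p s).toReal * Real.exp (β * V s))
        ≤ (1/β) * (β * b) := mul_le_mul_of_nonneg_left hlog (one_div_nonneg.mpr hpos.le)
      _ = b := by field_simp

lemma le_logsum {β : ℝ} (hβ : β ≠ 0) (p : PMF S) {V : S → ℝ} {a : ℝ} (h : ∀ s, a ≤ V s) :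
    a ≤ (1/β) * Real.log (∑ s : S, (p s).toReal * Real.exp (β * V s)) := by
  rcases hβ.lt_or_gt with hneg | hpos
  · have hle : ∑ s : S, (p s).toReal * Real.exp (β * V s) ≤ Real.exp (β * a) :=
      sum_exp_le β p V (β * a) fun s => mul_le_mul_of_nonpos_left (h s) hneg.le
    have hlog : Real.log (∑ s : S, (p s).toReal * Real.exp (β * V s)) ≤ β * a := by
      have := Real.log_le_log (sum_exp_pos β p V) hle
      rwa [Real.log_exp] at this
    calc a = (1/β) * (β * a) := by field_simp
      _ ≤ _ := mul_le_mul_of_nonpos_left hlog (one_div_nonpos.mpr hneg.le)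
  · have hge : Real.exp (β * a) ≤ ∑ s : S, (p s).toReal * Real.exp (β * V s) :=
      sum_exp_ge β p V (β * a) fun s => mul_le_mul_of_nonneg_left (h s) hpos.le
    have hlog : β * a ≤ Real.log (∑ s : S, (p s).toReal * Real.exp (β * V s)) := by
      have := Real.log_le_log (Real.exp_pos _) hge
      rwa [Real.log_exp] at this
    calc a = (1/β) * (β * a) := by field_simp
      _ ≤ _ := mul_le_mul_of_nonneg_left hlog (one_div_nonneg.mpr hpos.le)

lemma scalar_key {β : ℝ} (hβ : β ≠ 0) (Hr : ℝ) {x y : ℝ} (hx : 0 ≤ x) (hxy : x ≤ y)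
    (hy : y ≤ Hr) :
    y - x ≤ (if 0 < β then 1 else Real.exp (-β * Hr)) * ((1/β) * (Real.exp (β*y) - Real.exp (β*x))) := by
  rcases hβ.lt_or_gt with hneg | hpos
  · rw [if_neg (not_lt.mpr hneg.le)]
    have h1 : β * (x - y) + 1 ≤ Real.exp (β * (x - y)) := Real.add_one_le_exp _
    have hexp : Real.exp (β * x) = Real.exp (β * y) * Real.exp (β * (x - y)) := by
      rw [← Real.exp_add]; ring_nf
    have main : Real.exp (β * y) - Real.exp (β * x) ≤ β * (Real.exp (β * y) * (y - x)) := by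
      nlinarith [Real.exp_pos (β * y)]
    have step1 : Real.exp (β * y) * (y - x) ≤ (1/β) * (Real.exp (β*y) - Real.exp (β*x)) := by
      have := mul_le_mul_of_nonpos_left main (one_div_nonpos.mpr hneg.le)
      calc Real.exp (β * y) * (y - x) = (1/β) * (β * (Real.exp (β * y) * (y - x))) := by
            field_simp
        _ ≤ _ := this
    have step2 : Real.exp (β * Hr) * (y - x) ≤ Real.exp (β * y) * (y - x) :=
      mul_le_mul_of_nonneg_right (Real.exp_le_exp.2 (mul_le_mul_of_nonpos_left hy hneg.le))
        (sub_nonneg.mpr hxy)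
    have := mul_le_mul_of_nonneg_left (step2.trans step1) (Real.exp_nonneg (-β * Hr))
    calc y - x = Real.exp (-β * Hr) * (Real.exp (β * Hr) * (y - x)) := by
          have h0 : -β * Hr + β * Hr = 0 := by ring
          rw [← mul_assoc, ← Real.exp_add, h0, Real.exp_zero, one_mul]
      _ ≤ _ := this
  · rw [if_pos hpos, one_mul]
    have h1 : β * (y - x) + 1 ≤ Real.exp (β * (y - x)) := Real.add_one_le_exp _
    have hexp : Real.exp (β * y) = Real.exp (β * x) * Real.exp (β * (y - x)) := by
      rw [← Real.exp_add]; ring_nf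
    have h2 : 1 ≤ Real.exp (β * x) := Real.one_le_exp (by positivity)
    have main : β * (y - x) ≤ Real.exp (β * y) - Real.exp (β * x) := by
      nlinarith [mul_le_mul_of_nonneg_left h1 (Real.exp_pos (β * x)).le,
        mul_nonneg (mul_nonneg hpos.le (sub_nonneg.mpr hxy)) (by linarith : (0:ℝ) ≤ Real.exp (β * x) - 1)]
    calc y - x = (1/β) * (β * (y - x)) := by field_simp
      _ ≤ _ := mul_le_mul_of_nonneg_left main (one_div_nonneg.mpr hpos.le)

end Aux

section Induction

variable {S A : Type*} [Fintype S] [Nonempty S] [Fintype A] [Nonempty A]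
variable {β : ℝ} (r : ℕ → S → A → ℝ) (P : ℕ → S → A → PMF S)

lemma entV_bounds (hβ : β ≠ 0) (pol : ℕ → S → A) (H : ℕ)
    (hr : ∀ h ∈ Finset.Icc 1 H, ∀ s a, 0 ≤ r h s a ∧ r h s a ≤ 1) :
    ∀ n, n ≤ H → ∀ s, 0 ≤ entV β r P pol H n s ∧ entV β r P pol H n s ≤ n := by
  intro n
  induction n with
  | zero => intro _ s; simp [entV]
  | succ n ih =>
    intro hn s
    have hstep : H - n ∈ Finset.Icc 1 H := by
      rw [Finset.mem_Icc]
      omega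
    obtain ⟨hr0, hr1⟩ := hr (H - n) hstep s (pol (H - n) s)
    have ih' := ih (by omega)
    constructor
    · have hf : (0:ℝ) ≤ (1/β) * Real.log (∑ s' : S, (P (H - n) s (pol (H - n) s) s').toReal *
          Real.exp (β * entV β r P pol H n s')) :=
        le_logsum hβ _ fun s' => (ih' s').1
      show (0:ℝ) ≤ r (H - n) s (pol (H - n) s) + _
      linarith
    · have hf : (1/β) * Real.log (∑ s' : S, (P (H - n) s (pol (H - n) s) s').toReal *
          Real.exp (β * entV β r P pol H n s')) ≤ n :=
        logsum_le hβ _ fun s' => (ih' s').2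
      show r (H - n) s (pol (H - n) s) + _ ≤ (n + 1 : ℕ)
      push_cast
      linarith

lemma entVstar_bounds (hβ : β ≠ 0) (H : ℕ)
    (hr : ∀ h ∈ Finset.Icc 1 H, ∀ s a, 0 ≤ r h s a ∧ r h s a ≤ 1) :
    ∀ n, n ≤ H → ∀ s, 0 ≤ entVstar β r P H n s ∧ entVstar β r P H n s ≤ n := by
  intro n
  induction n with
  | zero => intro _ s; simp [entVstar]
  | succ n ih =>
    intro hn s
    have hstep : H - n ∈ Finset.Icc 1 H := by
      rw [Finset.mem_Icc]
      omega
    have ih' := ih (by omega)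
    have hbdd : ∀ a : A, 0 ≤ r (H - n) s a +
        (1/β) * Real.log (∑ s' : S, (P (H - n) s a s').toReal *
          Real.exp (β * entVstar β r P H n s')) ∧
        r (H - n) s a + (1/β) * Real.log (∑ s' : S, (P (H - n) s a s').toReal *
          Real.exp (β * entVstar β r P H n s')) ≤ (n + 1 : ℕ) := by
      intro a
      obtain ⟨hr0, hr1⟩ := hr (H - n) hstep s a
      have hf0 : (0:ℝ) ≤ (1/β) * Real.log (∑ s' : S, (P (H - n) s a s').toReal *
          Real.exp (β * entVstar β r P H n s')) :=
        le_logsum hβ _ fun s' => (ih' s').1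
      have hf1 : (1/β) * Real.log (∑ s' : S, (P (H - n) s a s').toReal *
          Real.exp (β * entVstar β r P H n s')) ≤ n :=
        logsum_le hβ _ fun s' => (ih' s').2
      constructor
      · linarith
      · push_cast; linarith
    constructor
    · show (0:ℝ) ≤ ⨆ a : A, _
      obtain ⟨a0⟩ := (inferInstance : Nonempty A)
      exact le_trans (hbdd a0).1 (le_ciSup (f := fun a : A => r (H - n) s a +
        (1/β) * Real.log (∑ s' : S, (P (H - n) s a s').toReal *
          Real.exp (β * entVstar β r P H n s')))
        (Set.Finite.bddAbove (Set.finite_range _)) a0)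
    · show (⨆ a : A, _ : ℝ) ≤ (n + 1 : ℕ)
      exact ciSup_le fun a => (hbdd a).2

lemma entV_le_entVstar (hβ : β ≠ 0) (pol : ℕ → S → A) (H : ℕ) :
    ∀ n s, entV β r P pol H n s ≤ entVstar β r P H n s := by
  intro n
  induction n with
  | zero => intro s; simp [entV, entVstar]
  | succ n ih =>
    intro s
    show r (H - n) s (pol (H - n) s) + (1/β) * Real.log (∑ s' : S,
        (P (H - n) s (pol (H - n) s) s').toReal * Real.exp (β * entV β r P pol H n s'))
      ≤ ⨆ a : A, (r (H - n) s a + (1/β) * Real.log (∑ s' : S, (P (H - n) s a s').toReal *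
          Real.exp (β * entVstar β r P H n s')))
    refine le_trans ?_ (le_ciSup (Set.Finite.bddAbove (Set.finite_range _)) (pol (H - n) s))
    have := logsum_mono hβ (P (H - n) s (pol (H - n) s)) (fun s' => ih s')
    linarith

end Induction

/-- **Lemma D.1.** The regret is bounded by the semi-normalized
exponential regret: `Σ_k (V*_1(s₁) - V^{π^k}_1(s₁)) ≤ ψ̄_β (1/β) Σ_k (e^{β V*_1(s₁)} - e^{β V^{π^k}_1(s₁)})`. -/
theorem regret_le_seminormalized_exponential_regret
    {S A : Type*} [Fintype S] [Nonempty S] [Fintype A] [Nonempty A]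
    (H : ℕ) (hH : 1 ≤ H) (β : ℝ) (hβ : β ≠ 0)
    (r : ℕ → S → A → ℝ) (hr : ∀ h ∈ Finset.Icc 1 H, ∀ s a, 0 ≤ r h s a ∧ r h s a ≤ 1)
    (P : ℕ → S → A → PMF S) (K : ℕ) (pol : ℕ → ℕ → S → A) (s₁ : S) :
    ∑ k ∈ Finset.range K, (entVstar β r P H H s₁ - entV β r P (pol k) H H s₁)
      ≤ (if 0 < β then 1 else Real.exp (-β * H)) * ((1 / β) *
          ∑ k ∈ Finset.range K, (Real.exp (β * entVstar β r P H H s₁) -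
            Real.exp (β * entV β r P (pol k) H H s₁))) := by
  have hb := entV_bounds r P hβ
  have hbs := entVstar_bounds r P hβ H hr H le_rfl s₁
  have hle := fun k => entV_le_entVstar r P hβ (pol k) H H s₁
  have hterm : ∀ k ∈ Finset.range K,
      entVstar β r P H H s₁ - entV β r P (pol k) H H s₁ ≤
        (if 0 < β then 1 else Real.exp (-β * H)) * ((1/β) *
          (Real.exp (β * entVstar β r P H H s₁) - Real.exp (β * entV β r P (pol k) H H s₁))) := by
    intro k _
    exact scalar_key hβ (H : ℝ) (hb (pol k) H hr H le_rfl s₁).1 (hle k) hbs.2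
  calc ∑ k ∈ Finset.range K, (entVstar β r P H H s₁ - entV β r P (pol k) H H s₁)
      ≤ ∑ k ∈ Finset.range K, (if 0 < β then 1 else Real.exp (-β * H)) * ((1/β) *
          (Real.exp (β * entVstar β r P H H s₁) - Real.exp (β * entV β r P (pol k) H H s₁))) :=
        Finset.sum_le_sum hterm
    _ = _ := by rw [← Finset.mul_sum, ← Finset.mul_sum]

end RiskMDP
end
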